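/- Let A be a unital complex Banach *-algebra, regarded as a Jordan Banach triple with triple product {a,b,c} = (a b* c + c b* a)/2. If δ : A → A* is a continuous ternary derivation, then δ = δ₀ + δ₁, where δ₀ is a continuous ternary derivation with δ₀(1) = 0 and δ₁, defined by δ₁(a) := δ(1)∘a* (i.e. δ₁(a)(x) = δ(1)(a*∘x) = (1/2)(δ(1)(a*x) + δ(1)(xa*))), coincides with the inner ternary derivation −(1/2)δ(1,δ(1)) : a ↦ −(1/2)({1,δ(1),a} − {δ(1),1,a}). -/
import Mathlib


/-!
STATEMENT 6: Let `A` be a unital complex Banach `*`-algebra with triple product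
`{a,b,c} = (a b* c + c b* a)/2`.  If `δ : A → A*` is a continuous ternary derivation,
then `δ = δ₀ + δ₁` where `δ₀` is a continuous ternary derivation with `δ₀(1) = 0` and
`δ₁(a) := δ(1)∘a*` (i.e. `δ₁(a)(x) = δ(1)(a*∘x)`) coincides with the inner ternary
derivation `−(1/2)δ(1,δ(1)) : a ↦ −(1/2)({1,δ(1),a} − {δ(1),1,a})`.
-/

open scoped ComplexConjugate

noncomputable section

variable {A : Type*} [NormedRing A] [NormedAlgebra ℂ A] [CompleteSpace A]
  [StarRing A] [StarModule ℂ A] [NormedStarGroup A]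

/-- The triple product `{a,b,c} = (a b* c + c b* a)/2`. -/
def jtrip (a b c : A) : A := (2 : ℂ)⁻¹ • (a * star b * c + c * star b * a)

/-- The Jordan product `a∘b = (ab+ba)/2`. -/
def jord (a b : A) : A := (2 : ℂ)⁻¹ • (a * b + b * a)

/-- `δ : A → A*` (continuous, conjugate-linear) is a ternary derivation:
`δ{a,b,c} = {δ(a),b,c} + {a,δ(b),c} + {a,b,δ(c)}`, written out pointwise on `A*`,
where `{a,b,φ}(x) = {φ,b,a}(x) := φ({b,a,x})` and `{a,φ,b}(x) := conj (φ({a,x,b}))`. -/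
def IsTernaryDer (δ : A →L⋆[ℂ] (A →L[ℂ] ℂ)) : Prop :=
  ∀ a b c x : A, δ (jtrip a b c) x
    = δ a (jtrip b c x) + conj (δ b (jtrip a x c)) + δ c (jtrip b a x)

set_option linter.unusedSectionVars false

lemma myhalf (y : A) : (2 : ℂ)⁻¹ • (y + y) = y := by
  rw [← two_smul ℂ, smul_smul, inv_mul_cancel₀ two_ne_zero, one_smul]

lemma star_jord (u v : A) : star (jord u v) = jord (star u) (star v) := by
  simp only [jord, star_smul, star_add, star_mul, star_inv₀, star_ofNat]
  rw [add_comm]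

lemma jtrip_one_left (a x : A) : jtrip (1:A) a x = jord (star a) x := by
  simp [jtrip, jord, add_comm]

/-- continuous Jordan multiplication operator -/
def jordL : A →L[ℂ] A →L[ℂ] A :=
  (2 : ℂ)⁻¹ • (ContinuousLinearMap.mul ℂ A + (ContinuousLinearMap.mul ℂ A).flip)

/-- the map `δ₁` -/
def del1 (φ : A →L[ℂ] ℂ) : A →L⋆[ℂ] (A →L[ℂ] ℂ) :=
  (((ContinuousLinearMap.compL ℂ A A ℂ φ).comp jordL).comp
    ((starL ℂ : A ≃L⋆[ℂ] A) : A →L⋆[ℂ] A))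

lemma del1_apply (φ : A →L[ℂ] ℂ) (a x : A) : del1 φ a x = φ (jord (star a) x) := by
  simp [del1, jordL, jord]

/-- the key algebraic identity in `A` -/
lemma elem_identity (a b c x : A) :
    jord (star (jtrip a b c)) x =
    jord (star a) (jtrip b c x) + jord (star c) (jtrip b a x)
      - jord b (star (jtrip a x c)) := by
  rw [eq_sub_iff_add_eq]
  simp only [jord, jtrip, star_smul, star_add, star_mul, star_star, mul_add, add_mul,
    smul_add, smul_mul_assoc, mul_smul_comm, smul_smul, mul_assoc, star_inv₀, star_ofNat]
  abel

/-- Decomposition `δ = δ₀ + δ₁` of a ternary derivation, where `δ₀` is a ternary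
derivation vanishing at `1`, `δ₁(a)(x) = δ(1)(a*∘x)`, and `δ₁` coincides with the
inner ternary derivation `−(1/2)δ(1,δ(1)) : a ↦ −(1/2)({1,δ(1),a} − {δ(1),1,a})`,
whose value at `a`, evaluated at `x ∈ A`, is
`−(1/2)(conj (δ(1)({1,x,a})) − δ(1)({1,a,x}))`. -/
theorem ternaryDer_decomposition
    (δ : A →L⋆[ℂ] (A →L[ℂ] ℂ)) (hδ : IsTernaryDer δ) :
    ∃ δ₀ δ₁ : A →L⋆[ℂ] (A →L[ℂ] ℂ),
      δ = δ₀ + δ₁ ∧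
      IsTernaryDer δ₀ ∧ δ₀ 1 = 0 ∧
      (∀ a x : A, δ₁ a x = δ 1 (jord (star a) x)) ∧
      (∀ a x : A, δ₁ a x
        = -(2 : ℂ)⁻¹ * (conj (δ 1 (jtrip 1 x a)) - δ 1 (jtrip 1 a x))) := by
  set φ : A →L[ℂ] ℂ := δ 1 with hφ
  -- key skew-symmetry of φ
  have hkey : ∀ y : A, conj (φ y) = - φ (star y) := by
    intro y
    have h := hδ 1 1 1 (star y)
    have h1 : jtrip (1:A) 1 1 = 1 := by
      simp only [jtrip, one_mul, mul_one, star_one]; exact myhalf _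
    have h2 : jtrip (1:A) 1 (star y) = star y := by
      simp only [jtrip, one_mul, mul_one, star_one]; exact myhalf _
    have h3 : jtrip (1:A) (star y) 1 = y := by
      simp only [jtrip, one_mul, mul_one, star_star]; exact myhalf _
    rw [h1, h2, h3] at h
    have : conj (φ y) = - φ (star y) := by
      rw [hφ]; linear_combination -h
    exact this
  refine ⟨δ - del1 φ, del1 φ, by abel, ?_, ?_, fun a x => del1_apply φ a x, ?_⟩
  · -- δ₀ is a ternary derivation
    intro a b c x
    have hd1 : del1 φ (jtrip a b c) x
        = del1 φ a (jtrip b c x) + conj (del1 φ b (jtrip a x c))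
          + del1 φ c (jtrip b a x) := by
      rw [del1_apply, del1_apply, del1_apply, del1_apply, hkey,
        star_jord, star_star, elem_identity, map_sub, map_add]
      ring
    simp only [ContinuousLinearMap.sub_apply, ContinuousLinearMap.coe_sub', Pi.sub_apply,
      map_sub]
    rw [hδ a b c x, hd1]
    ring
  · -- δ₀ 1 = 0
    ext x
    simp [del1_apply, jord, hφ]; ring
  · -- inner-derivation formula
    intro a x
    rw [del1_apply, jtrip_one_left, jtrip_one_left, hkey, star_jord, star_star]
    have : jord x (star a) = jord (star a) x := by
      rw [jord, jord, add_comm]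
    rw [this]
    ring
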